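/- With P the (d+1)×(d+1) Householder matrix whose top-left d×d block is I_d - (1/(D-√D))·𝟙 (D = d+1) and with 1/√D in all remaining entries of the last row and column, and with G the generator matrix of A_d*: for every a ∈ ℤ^d, the last coordinate of P·(Gᵀ a) is zero. That is, P maps the lattice A_d* into the hyperplane {x_{d+1} = 0}. -/
import Mathlib


open Matrix in
/-- With `P` the `(d+1)×(d+1)` Householder matrix whose top-left `d×d` block is
`I_d - (1/(D-√D))·𝟙` (`D = d+1`) and all remaining entries `1/√D`, and with `G` the
generator matrix of `A_d*`: for every integer vector `a`, the last coordinate of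
`P (Gᵀ a)` is zero; i.e. `P` maps `A_d*` into the hyperplane `{x_{d+1} = 0}`. -/
theorem stmt_11 (d : ℕ) (hd : 2 ≤ d) :
    let D : ℝ := (d : ℝ) + 1
    let P : Matrix (Fin (d + 1)) (Fin (d + 1)) ℝ := Matrix.of fun j k =>
      if j = Fin.last d ∨ k = Fin.last d then 1 / Real.sqrt D
      else (if j = k then (1 : ℝ) else 0) - 1 / (D - Real.sqrt D)
    let G : Matrix (Fin d) (Fin (d + 1)) ℝ := Matrix.of fun i j =>
      if (i : ℕ) < d - 1 then
        (if j = 0 then 1 else if (j : ℕ) = (i : ℕ) + 1 then -1 else 0)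
      else
        (if j = 0 then -(d : ℝ) / ((d : ℝ) + 1) else 1 / ((d : ℝ) + 1))
    ∀ a : Fin d → ℤ, (P *ᵥ (Gᵀ *ᵥ fun i => (a i : ℝ))) (Fin.last d) = 0 := by
  intro D P G a
  have hd1 : ((d : ℝ) + 1) ≠ 0 := by positivity
  have hrow : ∀ i : Fin d, ∑ j : Fin (d+1), G i j = 0 := by
    intro i
    by_cases hi : (i : ℕ) < d - 1
    · have h1 : ∀ j : Fin (d+1), G i j =
        (if j = 0 then (1:ℝ) else 0) +
        (if j = (⟨(i:ℕ)+1, by omega⟩ : Fin (d+1)) then (-1:ℝ) else 0) := by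
        intro j
        simp only [G, Matrix.of_apply, if_pos hi]
        rcases eq_or_ne j 0 with rfl | hj
        · simp [Fin.ext_iff]
        · simp [hj, Fin.ext_iff]
      rw [Finset.sum_congr rfl (fun j _ => h1 j), Finset.sum_add_distrib,
        Finset.sum_ite_eq' Finset.univ, Finset.sum_ite_eq' Finset.univ]
      simp
    · have h1 : ∀ j : Fin (d+1), G i j =
        (if j = 0 then (-(d:ℝ)/((d:ℝ)+1) - 1/((d:ℝ)+1)) else 0) + 1/((d:ℝ)+1) := by
        intro j
        simp only [G, Matrix.of_apply, if_neg hi]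
        rcases eq_or_ne j 0 with rfl | hj
        · simp
        · simp [hj]
      rw [Finset.sum_congr rfl (fun j _ => h1 j), Finset.sum_add_distrib,
        Finset.sum_ite_eq' Finset.univ, Finset.sum_const, Finset.card_univ]
      simp only [Finset.mem_univ, if_true, Fintype.card_fin, nsmul_eq_mul]
      push_cast
      field_simp
      ring
  have hP : ∀ k, P (Fin.last d) k = 1 / Real.sqrt D := by
    intro k; simp [P]
  simp only [Matrix.mulVec, dotProduct, Matrix.transpose_apply, hP]
  rw [← Finset.mul_sum, Finset.sum_comm]
  have : ∀ i : Fin d, ∑ j : Fin (d+1), G i j * (a i : ℝ) = 0 := by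
    intro i
    rw [← Finset.sum_mul, hrow i, zero_mul]
  rw [Finset.sum_congr rfl (fun i _ => this i), Finset.sum_const_zero, mul_zero]
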